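/- arXiv:2012.00498 — 6 statements merged into one kernel-verified Lean document; each statement's English description precedes it below -/
import Mathlib

section
/- Let n ≥ 1 and let C be the n×n matrix over ℚ with C_{ii} = 2, C_{ij} = −1 when |i−j| = 1, and C_{ij} = 0 otherwise (the Cartan matrix of type Aₙ). Then C is invertible, and for every j ∈ {1,…,n} the minimum over i ∈ {1,…,n} of (C⁻¹)_{ij} + (C⁻¹)_{i,n+1−j} equals 1. Moreover, if j = 1 or j = n this minimum is attained at every i ∈ {1,…,n}, while if 2 ≤ j ≤ n−1 it is attained exactly at i = 1 and i = n. -/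
/-!
With 0-based indices, the inverse of the Cartan matrix of type Aₙ is
`(C⁻¹)ᵢₖ = (min i k + 1) (n - max i k) / (n + 1)`: as a function of `i` this is the Green's
function of the discrete Laplacian on a path, linear on each side of `k`, with kink `-1` at `k`
and vanishing at the phantom boundary points `-1` and `n`. Adding columns `j` and `n - 1 - j`
gives exactly `min (min (i + 1) (n - i)) (min (j + 1) (n - j))`, a positive integer
equal to `1` precisely when `i` or `j` is an end point of the Dynkin diagram.
-/

noncomputable def invCartanA (n : ℕ) (i k : ℤ) : ℚ :=
  ((min i k + 1 : ℤ) : ℚ) * (((n : ℤ) - max i k : ℤ) : ℚ) / ((n : ℚ) + 1)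

namespace invCartanA

variable {n : ℕ} {i k : ℤ}

lemma of_le (h : i ≤ k) : invCartanA n i k = (i + 1) * (n - k) / (n + 1) := by
  simp [invCartanA, min_eq_left h, max_eq_right h]

lemma of_ge (h : k ≤ i) : invCartanA n i k = (k + 1) * (n - i) / (n + 1) := by
  simp [invCartanA, min_eq_right h, max_eq_left h]

lemma eq_zero_of_boundary (hk : 0 ≤ k) (hk' : k ≤ n) (hi : i = -1 ∨ i = n) :
    invCartanA n i k = 0 := by
  rcases hi with rfl | rfl
  · simp [of_le (by omega : -1 ≤ k)]
  · simp [of_ge hk']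

lemma two_mul_sub_sub (hk : 0 ≤ k) (hk' : k < n) :
    2 * invCartanA n i k - invCartanA n (i - 1) k - invCartanA n (i + 1) k =
      if i = k then 1 else 0 := by
  have hn : (n : ℚ) + 1 ≠ 0 := by positivity
  rcases lt_trichotomy i k with h | rfl | h
  · rw [of_le h.le, of_le (by omega), of_le (by omega), if_neg h.ne]
    push_cast
    field_simp
    ring
  · rw [of_le le_rfl, of_le (by omega), of_ge (by omega), if_pos rfl]
    push_cast
    field_simp
    ring
  · rw [of_ge h.le, of_ge (by omega), of_ge (by omega), if_neg h.ne']
    push_cast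
    field_simp
    ring

lemma add_reflect_eq_min :
    invCartanA n i k + invCartanA n i (n - 1 - k) =
      (min (min (i + 1) (n - i)) (min (k + 1) (n - k)) : ℤ) := by
  have hn : (n : ℚ) + 1 ≠ 0 := by positivity
  rcases le_total i k with h₁ | h₁ <;> rcases le_total i (n - 1 - k) with h₂ | h₂
  · rw [of_le h₁, of_le h₂,
      show min (min (i + 1) (n - i)) (min (k + 1) (n - k)) = i + 1 by omega]
    push_cast
    field_simp
    ring
  · rw [of_le h₁, of_ge h₂,
      show min (min (i + 1) (n - i)) (min (k + 1) (n - k)) = n - k by omega]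
    push_cast
    field_simp
    ring
  · rw [of_ge h₁, of_le h₂,
      show min (min (i + 1) (n - i)) (min (k + 1) (n - k)) = k + 1 by omega]
    push_cast
    field_simp
    ring
  · rw [of_ge h₁, of_ge h₂,
      show min (min (i + 1) (n - i)) (min (k + 1) (n - k)) = n - i by omega]
    push_cast
    field_simp
    ring

end invCartanA

lemma Fin.sum_ite_val_eq {M : Type*} [AddCommMonoid M] (n : ℕ) (m : ℤ) (f : ℤ → M)
    (hf : (m < 0 ∨ n ≤ m) → f m = 0) :
    ∑ j : Fin n, (if (j : ℤ) = m then f j else 0) = f m := by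
  by_cases hm : 0 ≤ m ∧ m < n
  · lift m to ℕ using hm.1
    rw [Finset.sum_eq_single_of_mem ⟨m, by omega⟩ (Finset.mem_univ _) fun j _ hj => if_neg ?_,
      if_pos rfl]
    exact fun h => hj (Fin.ext (by simp only at h ⊢; omega))
  · rw [hf (by omega)]
    exact Finset.sum_eq_zero fun j _ => if_neg (by omega)

lemma mul_invCartanA_eq_one {n : ℕ} {C : Matrix (Fin n) (Fin n) ℚ}
    (hC : ∀ i j : Fin n, C i j =
      if i = j then 2 else if ((i : ℤ) - (j : ℤ)).natAbs = 1 then -1 else 0) :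
    C * Matrix.of (fun i k : Fin n => invCartanA n i k) = 1 := by
  have hC' : ∀ i j : Fin n, C i j =
      (if (j : ℤ) = i then 2 else 0) + (if (j : ℤ) = i - 1 then -1 else 0) +
        (if (j : ℤ) = i + 1 then -1 else 0) := by
    intro i j
    rw [hC]
    simp only [Fin.ext_iff]
    split_ifs <;> first | omega | norm_num
  ext i k
  have hi := i.isLt
  have hk := k.isLt
  have hboundary (m : ℤ) (hm : -1 ≤ m ∧ m ≤ n) (h : m < 0 ∨ n ≤ m) :
      -1 * invCartanA n m k = 0 := by
    rw [invCartanA.eq_zero_of_boundary (by omega) (by omega) (by omega), mul_zero]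
  simp only [Matrix.mul_apply, hC', add_mul, ite_mul, zero_mul, Matrix.of_apply,
    Finset.sum_add_distrib]
  rw [Fin.sum_ite_val_eq n i (fun m => 2 * invCartanA n m k) (by omega),
    Fin.sum_ite_val_eq n (i - 1) (fun m => -1 * invCartanA n m k)
      (hboundary _ (by omega)),
    Fin.sum_ite_val_eq n (i + 1) (fun m => -1 * invCartanA n m k)
      (hboundary _ (by omega)),
    Matrix.one_apply]
  have := invCartanA.two_mul_sub_sub (n := n) (i := i) (k := k) (by omega) (by omega)
  simp only [Int.natCast_inj, Fin.val_inj] at this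
  rw [← this]
  ring

theorem stmt_0_general (n : ℕ) (C : Matrix (Fin n) (Fin n) ℚ)
    (hC : ∀ i j : Fin n, C i j =
      if i = j then 2 else if ((i : ℤ) - (j : ℤ)).natAbs = 1 then -1 else 0) :
    IsUnit C ∧
    ∀ j : Fin n,
      ((∀ i : Fin n, 1 ≤ C⁻¹ i j + C⁻¹ i j.rev) ∧
        (∃ i : Fin n, C⁻¹ i j + C⁻¹ i j.rev = 1)) ∧
      (((j : ℕ) = 0 ∨ (j : ℕ) = n - 1) →
        ∀ i : Fin n, C⁻¹ i j + C⁻¹ i j.rev = 1) ∧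
      ((1 ≤ (j : ℕ) ∧ (j : ℕ) ≤ n - 2) →
        ∀ i : Fin n, (C⁻¹ i j + C⁻¹ i j.rev = 1 ↔ (i : ℕ) = 0 ∨ (i : ℕ) = n - 1)) := by
  have hinv := mul_invCartanA_eq_one hC
  refine ⟨(C.isUnit_iff_isUnit_det).2 (Matrix.isUnit_det_of_right_inverse hinv), fun j => ?_⟩
  have hsum : ∀ i : Fin n, C⁻¹ i j + C⁻¹ i j.rev =
      (min (min ((i : ℤ) + 1) (n - i)) (min ((j : ℤ) + 1) (n - j)) : ℤ) := by
    intro i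
    rw [Matrix.inv_eq_right_inv hinv, Matrix.of_apply, Matrix.of_apply, Fin.val_rev,
      ← invCartanA.add_reflect_eq_min]
    congr 2
    omega
  simp only [hsum, ← Int.cast_one (R := ℚ), Int.cast_le, Int.cast_inj]
  have := j.isLt
  refine ⟨⟨fun i => by omega, ⟨0, by omega⟩, by simp only [Nat.cast_zero]; omega⟩,
    fun _ i => by omega, fun _ i => by omega⟩

/-- Type Aₙ row of the minimal bandwidth theorem: `C` is the Cartan matrix of type Aₙ
(0-based indexing: Lean index `i : Fin n` corresponds to the math index `i+1`),
`C⁻¹ i j` is the coefficient of `α_{i+1}` in the fundamental weight `ω_{j+1}`, and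
`Fin.rev j` corresponds to the math index `n+1-(j+1)`. -/
theorem stmt_0 (n : ℕ) (hn : 1 ≤ n) (C : Matrix (Fin n) (Fin n) ℚ)
    (hC : ∀ i j : Fin n, C i j =
      if i = j then 2 else if ((i : ℤ) - (j : ℤ)).natAbs = 1 then -1 else 0) :
    IsUnit C ∧
    ∀ j : Fin n,
      ((∀ i : Fin n, 1 ≤ C⁻¹ i j + C⁻¹ i j.rev) ∧
        (∃ i : Fin n, C⁻¹ i j + C⁻¹ i j.rev = 1)) ∧
      (((j : ℕ) = 0 ∨ (j : ℕ) = n - 1) →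
        ∀ i : Fin n, C⁻¹ i j + C⁻¹ i j.rev = 1) ∧
      ((1 ≤ (j : ℕ) ∧ (j : ℕ) ≤ n - 2) →
        ∀ i : Fin n, (C⁻¹ i j + C⁻¹ i j.rev = 1 ↔ (i : ℕ) = 0 ∨ (i : ℕ) = n - 1)) :=
  stmt_0_general n C hC
end

section
/- Let n ≥ 2 and let C be the n×n matrix over ℚ with C_{ii} = 2, C_{i,i+1} = C_{i+1,i} = −1 for 1 ≤ i ≤ n−2, C_{n−1,n} = −1, C_{n,n−1} = −2, and all other entries 0 (the Cartan matrix of type Bₙ). Then C is invertible, and for each j ∈ {1,…,n} set b(j) := min over i ∈ {1,…,n} of 2(C⁻¹)_{ij}. Then b(j) = 2 for 1 ≤ j ≤ n−1 and b(n) = 1. Moreover, for j = 1 the minimum is attained at every i, while for 2 ≤ j ≤ n it is attained exactly at i = 1. -/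
open Finset

/-- Explicit inverse of the type Bₙ Cartan matrix. -/
def Mb (n : ℕ) : Matrix (Fin n) (Fin n) ℚ :=
  fun i j => if (j : ℕ) = n - 1 then ((i : ℕ) + 1) / 2
             else ((min (i : ℕ) (j : ℕ) : ℕ) : ℚ) + 1

lemma keyB (n : ℕ) (hn : 2 ≤ n) (C : Matrix (Fin n) (Fin n) ℚ)
    (hC : ∀ i j : Fin n, C i j =
      if i = j then 2
      else if (i : ℕ) + 1 = (j : ℕ) then -1
      else if (j : ℕ) + 1 = (i : ℕ) then (if (i : ℕ) = n - 1 then -2 else -1)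
      else 0) : C * Mb n = 1 := by
  ext i j
  rw [Matrix.mul_apply, Matrix.one_apply]
  have hdecomp : ∀ k : Fin n, C i k * Mb n k j =
      (if k = i then 2 * Mb n k j else 0)
    + (if (k : ℕ) = (i : ℕ) + 1 then -(Mb n k j) else 0)
    + (if (k : ℕ) + 1 = (i : ℕ) then
        (if (i : ℕ) = n - 1 then (-2 : ℚ) else -1) * Mb n k j else 0) := by
    intro k
    rw [hC]
    simp only [Fin.ext_iff]
    split_ifs <;> first | ring1 | (exfalso; omega)
  rw [Finset.sum_congr rfl fun k _ => hdecomp k]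
  rw [Finset.sum_add_distrib, Finset.sum_add_distrib]
  rw [Finset.sum_ite_eq' univ i (fun k => 2 * Mb n k j), if_pos (Finset.mem_univ i)]
  have hS2 : (∑ k : Fin n, if (k : ℕ) = (i : ℕ) + 1 then -(Mb n k j) else 0) =
      if h : (i : ℕ) + 1 < n then -(Mb n ⟨(i : ℕ) + 1, h⟩ j) else 0 := by
    by_cases h : (i : ℕ) + 1 < n
    · rw [dif_pos h, Finset.sum_eq_single_of_mem (⟨(i : ℕ) + 1, h⟩ : Fin n) (mem_univ _)
        (fun k _ hk => if_neg fun hc => hk (Fin.ext (by simpa using hc)))]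
      rw [if_pos (by simp)]
    · rw [dif_neg h]
      exact Finset.sum_eq_zero fun k _ => if_neg (by have := k.isLt; omega)
  have hS3 : ∀ c : ℚ, (∑ k : Fin n, if (k : ℕ) + 1 = (i : ℕ) then c * Mb n k j else 0) =
      if h : 0 < (i : ℕ) then c * Mb n ⟨(i : ℕ) - 1, by omega⟩ j else 0 := by
    intro c
    by_cases h : 0 < (i : ℕ)
    · rw [dif_pos h, Finset.sum_eq_single_of_mem (⟨(i : ℕ) - 1, by omega⟩ : Fin n) (mem_univ _)
        (fun k _ hk => if_neg fun hc => hk (Fin.ext (by simp; omega)))]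
      rw [if_pos (by simp; omega)]
    · rw [dif_neg h]
      exact Finset.sum_eq_zero fun k _ => if_neg (by omega)
  rw [hS2, hS3 (if (i : ℕ) = n - 1 then (-2 : ℚ) else -1)]
  have ha : (i : ℕ) < n := i.isLt
  have hbn : (j : ℕ) < n := j.isLt
  have hij : (i = j) ↔ ((i : ℕ) = (j : ℕ)) := Fin.ext_iff
  simp only [Mb]
  by_cases hb : (j : ℕ) = n - 1
  · simp only [if_pos hb]
    by_cases hi0 : (i : ℕ) = 0
    · rw [dif_pos (show (i : ℕ) + 1 < n by omega), dif_neg (show ¬0 < (i : ℕ) by omega),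
        if_neg (show ¬i = j by rw [hij]; omega)]
      push_cast
      rw [hi0]
      norm_num
    · by_cases hin : (i : ℕ) = n - 1
      · rw [dif_neg (show ¬(i : ℕ) + 1 < n by omega), dif_pos (show 0 < (i : ℕ) by omega),
          if_pos hin, if_pos (show i = j by rw [hij]; omega)]
        rw [Nat.cast_sub (show 1 ≤ (i : ℕ) by omega)]
        push_cast
        ring
      · rw [dif_pos (by omega), dif_pos (by omega), if_neg hin,
          if_neg (show ¬i = j by rw [hij]; omega)]
        rw [Nat.cast_sub (show 1 ≤ (i : ℕ) by omega)]
        push_cast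
        ring
  · simp only [if_neg hb]
    by_cases hi0 : (i : ℕ) = 0
    · rw [dif_pos (show (i : ℕ) + 1 < n by omega), dif_neg (show ¬0 < (i : ℕ) by omega)]
      rw [show min (i : ℕ) (j : ℕ) = 0 from by omega]
      by_cases hj0 : (j : ℕ) = 0
      · rw [show min ((i : ℕ) + 1) (j : ℕ) = 0 from by omega,
          if_pos (show i = j by rw [hij]; omega)]
        norm_num
      · rw [show min ((i : ℕ) + 1) (j : ℕ) = 1 from by omega,
          if_neg (show ¬i = j by rw [hij]; omega)]
        norm_num
    · by_cases hin : (i : ℕ) = n - 1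
      · rw [dif_neg (by omega), dif_pos (by omega), if_pos hin,
          if_neg (show ¬i = j by rw [hij]; omega)]
        rw [show min (i : ℕ) (j : ℕ) = (j : ℕ) from by omega,
          show min ((i : ℕ) - 1) (j : ℕ) = (j : ℕ) from by omega]
        ring
      · rw [dif_pos (by omega), dif_pos (by omega), if_neg hin]
        rcases lt_trichotomy (i : ℕ) (j : ℕ) with h | h | h
        · rw [if_neg (show ¬i = j by rw [hij]; omega),
            show min (i : ℕ) (j : ℕ) = (i : ℕ) from by omega,
            show min ((i : ℕ) + 1) (j : ℕ) = (i : ℕ) + 1 from by omega,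
            show min ((i : ℕ) - 1) (j : ℕ) = (i : ℕ) - 1 from by omega,
            Nat.cast_sub (show 1 ≤ (i : ℕ) by omega)]
          push_cast
          ring
        · rw [if_pos (show i = j by rw [hij]; omega),
            show min (i : ℕ) (j : ℕ) = (i : ℕ) from by omega,
            show min ((i : ℕ) + 1) (j : ℕ) = (i : ℕ) from by omega,
            show min ((i : ℕ) - 1) (j : ℕ) = (i : ℕ) - 1 from by omega,
            Nat.cast_sub (show 1 ≤ (i : ℕ) by omega)]
          push_cast
          ring
        · rw [if_neg (show ¬i = j by rw [hij]; omega),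
            show min (i : ℕ) (j : ℕ) = (j : ℕ) from by omega,
            show min ((i : ℕ) + 1) (j : ℕ) = (j : ℕ) from by omega,
            show min ((i : ℕ) - 1) (j : ℕ) = (j : ℕ) from by omega]
          ring


/-- Type Bₙ row of the minimal bandwidth theorem: `C` is the Cartan matrix of type Bₙ
(0-based indexing: Lean index `i : Fin n` corresponds to the math index `i+1`).
The minimum over `i` of `2 * C⁻¹ i j` equals `1` if `j` is the last index and `2`
otherwise; it is attained at every `i` when `j` is the first index, and exactly at the
first index `i` otherwise. -/
theorem stmt_1 (n : ℕ) (hn : 2 ≤ n) (C : Matrix (Fin n) (Fin n) ℚ)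
    (hC : ∀ i j : Fin n, C i j =
      if i = j then 2
      else if (i : ℕ) + 1 = (j : ℕ) then -1
      else if (j : ℕ) + 1 = (i : ℕ) then (if (i : ℕ) = n - 1 then -2 else -1)
      else 0) :
    IsUnit C ∧
    ∀ j : Fin n,
      (∀ i : Fin n, (if (j : ℕ) = n - 1 then (1 : ℚ) else 2) ≤ 2 * C⁻¹ i j) ∧
      (∃ i : Fin n, 2 * C⁻¹ i j = (if (j : ℕ) = n - 1 then (1 : ℚ) else 2)) ∧
      (∀ i : Fin n,
        (2 * C⁻¹ i j = (if (j : ℕ) = n - 1 then (1 : ℚ) else 2) ↔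
          (j : ℕ) = 0 ∨ (i : ℕ) = 0)) := by
  have h1 : C * Mb n = 1 := keyB n hn C hC
  have hCinv : C⁻¹ = Mb n := Matrix.inv_eq_right_inv h1
  refine ⟨(Matrix.isUnit_iff_isUnit_det C).mpr (Matrix.isUnit_det_of_right_inverse h1), ?_⟩
  intro j
  have hbn : (j : ℕ) < n := j.isLt
  rw [hCinv]
  refine ⟨?_, ?_, ?_⟩
  · intro i
    simp only [Mb]
    by_cases hb : (j : ℕ) = n - 1
    · rw [if_pos hb, if_pos hb]
      have : (0 : ℚ) ≤ ((i : ℕ) : ℚ) := Nat.cast_nonneg _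
      linarith
    · rw [if_neg hb, if_neg hb]
      have : (0 : ℚ) ≤ ((min (i : ℕ) (j : ℕ) : ℕ) : ℚ) := Nat.cast_nonneg _
      linarith
  · refine ⟨⟨0, by omega⟩, ?_⟩
    simp only [Mb]
    by_cases hb : (j : ℕ) = n - 1
    · rw [if_pos hb, if_pos hb]
      norm_num
    · rw [if_neg hb, if_neg hb]
      norm_num
  · intro i
    simp only [Mb]
    by_cases hb : (j : ℕ) = n - 1
    · rw [if_pos hb, if_pos hb]
      constructor
      · intro h
        right
        have : ((i : ℕ) : ℚ) = 0 := by linarith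
        exact_mod_cast this
      · rintro (h | h)
        · exfalso; omega
        · rw [h]; norm_num
    · rw [if_neg hb, if_neg hb]
      constructor
      · intro h
        have hm : ((min (i : ℕ) (j : ℕ) : ℕ) : ℚ) = 0 := by linarith
        have : min (i : ℕ) (j : ℕ) = 0 := by exact_mod_cast hm
        omega
      · intro h
        have : min (i : ℕ) (j : ℕ) = 0 := by omega
        rw [this]
        norm_num
end

section
/- Let n ≥ 3 and let C be the n×n matrix over ℚ with C_{ii} = 2, C_{i,i+1} = C_{i+1,i} = −1 for 1 ≤ i ≤ n−2, C_{n−1,n} = −2, C_{n,n−1} = −1, and all other entries 0 (the Cartan matrix of type Cₙ). Then C is invertible, and for each j ∈ {1,…,n} set b(j) := min over i ∈ {1,…,n} of 2(C⁻¹)_{ij}. Then b(1) = 1 and b(j) = 2 for 2 ≤ j ≤ n. Moreover, the minimum is attained exactly at i = n when j = 1, exactly at i ∈ {1, n} when j = 2, and exactly at i = 1 when 3 ≤ j ≤ n. -/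
theorem sum_two' {n : ℕ} (f : Fin n → ℚ) (a b : Fin n) (hab : a ≠ b)
    (h : ∀ j, j ≠ a → j ≠ b → f j = 0) :
    ∑ j, f j = f a + f b := by
  have key : ∑ j ∈ ({a, b} : Finset (Fin n)), f j = ∑ j, f j :=
    Finset.sum_subset (Finset.subset_univ _) (by
      intro x _ hx
      simp only [Finset.mem_insert, Finset.mem_singleton, not_or] at hx
      exact h x hx.1 hx.2)
  rw [← key, Finset.sum_insert (by simp [hab]), Finset.sum_singleton]

theorem sum_three' {n : ℕ} (f : Fin n → ℚ) (a b c : Fin n)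
    (hab : a ≠ b) (hac : a ≠ c) (hbc : b ≠ c)
    (h : ∀ j, j ≠ a → j ≠ b → j ≠ c → f j = 0) :
    ∑ j, f j = f a + f b + f c := by
  have key : ∑ j ∈ ({a, b, c} : Finset (Fin n)), f j = ∑ j, f j :=
    Finset.sum_subset (Finset.subset_univ _) (by
      intro x _ hx
      simp only [Finset.mem_insert, Finset.mem_singleton, not_or] at hx
      exact h x hx.1 hx.2.1 hx.2.2)
  rw [← key, Finset.sum_insert (by simp [hab, hac]),
    Finset.sum_insert (by simp [hbc]), Finset.sum_singleton, add_assoc]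

/-- Type Cₙ row of the minimal bandwidth theorem: `C` is the Cartan matrix of type Cₙ
(0-based indexing: Lean index `i : Fin n` corresponds to the math index `i+1`).
With `b j = 1` for the first index and `b j = 2` otherwise, the minimum over `i` of
`2 * C⁻¹ i j` equals `b j`, attained exactly at `i = n` (math) when `j = 1` (math),
exactly at `i ∈ {1, n}` when `j = 2`, and exactly at `i = 1` when `3 ≤ j ≤ n`. -/
theorem stmt_2 (n : ℕ) (hn : 3 ≤ n) (C : Matrix (Fin n) (Fin n) ℚ)
    (hC : ∀ i j : Fin n, C i j =
      if i = j then 2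
      else if (i : ℕ) + 1 = (j : ℕ) then (if (j : ℕ) = n - 1 then -2 else -1)
      else if (j : ℕ) + 1 = (i : ℕ) then -1
      else 0) :
    IsUnit C ∧
    ∀ j : Fin n,
      (∀ i : Fin n, (if (j : ℕ) = 0 then (1 : ℚ) else 2) ≤ 2 * C⁻¹ i j) ∧
      (∃ i : Fin n, 2 * C⁻¹ i j = (if (j : ℕ) = 0 then (1 : ℚ) else 2)) ∧
      (∀ i : Fin n,
        (2 * C⁻¹ i j = (if (j : ℕ) = 0 then (1 : ℚ) else 2) ↔
          ((j : ℕ) = 0 ∧ (i : ℕ) = n - 1) ∨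
          ((j : ℕ) = 1 ∧ ((i : ℕ) = 0 ∨ (i : ℕ) = n - 1)) ∨
          (2 ≤ (j : ℕ) ∧ (i : ℕ) = 0))) := by
  obtain ⟨M, rfl⟩ : ∃ M, n = M + 3 := ⟨n - 3, by omega⟩
  have hn1 : M + 3 - 1 = M + 2 := by omega
  -- the candidate inverse
  set B : Matrix (Fin (M + 3)) (Fin (M + 3)) ℚ := Matrix.of (fun i j =>
    if (i : ℕ) = M + 2 then ((j : ℕ) + 1) / 2
    else ((Nat.cast (min (i : ℕ) (j : ℕ)) : ℚ) + 1)) with hB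
  have hBval : ∀ i j : Fin (M + 3), B i j =
      if (i : ℕ) = M + 2 then ((((j : ℕ) : ℚ) + 1) / 2 : ℚ)
      else (((min (i : ℕ) (j : ℕ) : ℕ) : ℚ) + 1 : ℚ) := fun i j => rfl
  have hz : ∀ i j : Fin (M + 3), (i : ℕ) ≠ (j : ℕ) → (i : ℕ) + 1 ≠ (j : ℕ) →
      (j : ℕ) + 1 ≠ (i : ℕ) → C i j = 0 := by
    intro i j h1 h2 h3
    rw [hC, if_neg (by simpa [Fin.ext_iff] using h1), if_neg h2, if_neg h3]
  have cval : ∀ (a b : ℕ) (ha : a < M + 3) (hb : b < M + 3),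
      C ⟨a, ha⟩ ⟨b, hb⟩ = if a = b then 2
        else if a + 1 = b then (if b = M + 2 then -2 else -1)
        else if b + 1 = a then -1 else 0 := by
    intro a b ha hb
    rw [hC]
    simp only [Fin.ext_iff, Fin.val_mk, hn1]
  have bval : ∀ (a b : ℕ) (ha : a < M + 3) (hb : b < M + 3),
      B ⟨a, ha⟩ ⟨b, hb⟩ = if a = M + 2 then (((b : ℚ) + 1) / 2 : ℚ)
        else (((min a b : ℕ) : ℚ) + 1 : ℚ) := fun a b ha hb => rfl
  have hmul : C * B = 1 := by
    ext i k
    obtain ⟨iv, hilt⟩ := i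
    obtain ⟨kv, hklt⟩ := k
    rw [Matrix.mul_apply, Matrix.one_apply]
    have hik : ((⟨iv, hilt⟩ : Fin (M + 3)) = ⟨kv, hklt⟩) = (iv = kv) := by
      simp [Fin.ext_iff]
    simp only [hik]
    rcases Nat.lt_or_ge iv 1 with hi0 | hi1
    · -- iv = 0 : two terms, at 0 and 1
      have hiv : iv = 0 := by omega
      subst hiv
      rw [sum_two' _ ⟨0, by omega⟩ ⟨1, by omega⟩ (by simp)
        (fun j hja hjb => by
          have h1 : (j : ℕ) ≠ 0 := fun h => hja (Fin.ext (by simpa using h))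
          have h2 : (j : ℕ) ≠ 1 := fun h => hjb (Fin.ext (by simpa using h))
          rw [hz _ j (by simp <;> omega) (by simp <;> omega) (by simp <;> omega), zero_mul])]
      have c1 : C ⟨0, hilt⟩ ⟨0, by omega⟩ = 2 := by
        rw [cval, if_pos rfl]
      have c2 : C ⟨0, hilt⟩ ⟨1, by omega⟩ = -1 := by
        rw [cval, if_neg (by omega), if_pos rfl, if_neg (by omega)]
      have b1 : B ⟨0, by omega⟩ ⟨kv, hklt⟩ = ((min 0 kv : ℕ) : ℚ) + 1 := by
        rw [bval, if_neg (by omega)]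
      have b2 : B ⟨1, by omega⟩ ⟨kv, hklt⟩ = ((min 1 kv : ℕ) : ℚ) + 1 := by
        rw [bval, if_neg (by omega)]
      rw [c1, c2, b1, b2]
      rcases Nat.lt_or_ge kv 1 with hk | hk
      · have hk0 : kv = 0 := by omega
        subst hk0
        norm_num
      · have h1 : min 0 kv = 0 := by omega
        have h2 : min 1 kv = 1 := by omega
        rw [h1, h2, if_neg (by omega)]
        norm_num
    · rcases Nat.lt_or_ge iv (M + 1) with him | hige
      · -- 1 ≤ iv ≤ M : three terms, generic middle row
        obtain ⟨m, rfl⟩ : ∃ m, iv = m + 1 := ⟨iv - 1, by omega⟩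
        have hmM : m + 1 ≤ M := by omega
        rw [sum_three' _ ⟨m, by omega⟩ ⟨m + 1, by omega⟩ ⟨m + 2, by omega⟩
          (by simp) (by simp) (by simp)
          (fun j hja hjb hjc => by
            have h1 : (j : ℕ) ≠ m := fun h => hja (Fin.ext (by simpa using h))
            have h2 : (j : ℕ) ≠ m + 1 := fun h => hjb (Fin.ext (by simpa using h))
            have h3 : (j : ℕ) ≠ m + 2 := fun h => hjc (Fin.ext (by simpa using h))
            rw [hz _ j (by simp <;> omega) (by simp <;> omega) (by simp <;> omega), zero_mul])]
        have c1 : C ⟨m + 1, hilt⟩ ⟨m, by omega⟩ = -1 := by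
          rw [cval, if_neg (by omega), if_neg (by omega), if_pos rfl]
        have c2 : C ⟨m + 1, hilt⟩ ⟨m + 1, by omega⟩ = 2 := by
          rw [cval, if_pos rfl]
        have c3 : C ⟨m + 1, hilt⟩ ⟨m + 2, by omega⟩ = -1 := by
          rw [cval, if_neg (by omega), if_pos rfl, if_neg (by omega)]
        have b1 : B ⟨m, by omega⟩ ⟨kv, hklt⟩ = ((min m kv : ℕ) : ℚ) + 1 := by
          rw [bval, if_neg (by omega)]
        have b2 : B ⟨m + 1, by omega⟩ ⟨kv, hklt⟩ = ((min (m + 1) kv : ℕ) : ℚ) + 1 := by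
          rw [bval, if_neg (by omega)]
        have b3 : B ⟨m + 2, by omega⟩ ⟨kv, hklt⟩ = ((min (m + 2) kv : ℕ) : ℚ) + 1 := by
          rw [bval, if_neg (by omega)]
        rw [c1, c2, c3, b1, b2, b3]
        rcases Nat.lt_or_ge kv (m + 1) with hk | hk
        · have e1 : min m kv = kv := by omega
          have e2 : min (m + 1) kv = kv := by omega
          have e3 : min (m + 2) kv = kv := by omega
          rw [e1, e2, e3, if_neg (by omega)]
          ring
        · rcases Nat.lt_or_ge kv (m + 2) with hk2 | hk2
          · have hkm : kv = m + 1 := by omega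
            subst hkm
            have e1 : min m (m + 1) = m := by omega
            have e2 : min (m + 1) (m + 1) = m + 1 := by omega
            have e3 : min (m + 2) (m + 1) = m + 1 := by omega
            rw [e1, e2, e3, if_pos rfl]
            push_cast
            ring
          · have e1 : min m kv = m := by omega
            have e2 : min (m + 1) kv = m + 1 := by omega
            have e3 : min (m + 2) kv = m + 2 := by omega
            rw [e1, e2, e3, if_neg (by omega)]
            push_cast
            ring
      · rcases Nat.lt_or_ge iv (M + 2) with hi | hi
        · -- iv = M + 1 : three terms, last with coefficient -2 and half-row
          have hiv : iv = M + 1 := by omega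
          subst hiv
          rw [sum_three' _ ⟨M, by omega⟩ ⟨M + 1, by omega⟩ ⟨M + 2, by omega⟩
            (by simp) (by simp) (by simp)
            (fun j hja hjb hjc => by
              have h1 : (j : ℕ) ≠ M := fun h => hja (Fin.ext (by simpa using h))
              have h2 : (j : ℕ) ≠ M + 1 := fun h => hjb (Fin.ext (by simpa using h))
              have h3 : (j : ℕ) ≠ M + 2 := fun h => hjc (Fin.ext (by simpa using h))
              rw [hz _ j (by simp <;> omega) (by simp <;> omega) (by simp <;> omega), zero_mul])]
          have c1 : C ⟨M + 1, hilt⟩ ⟨M, by omega⟩ = -1 := by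
            rw [cval, if_neg (by omega), if_neg (by omega), if_pos rfl]
          have c2 : C ⟨M + 1, hilt⟩ ⟨M + 1, by omega⟩ = 2 := by
            rw [cval, if_pos rfl]
          have c3 : C ⟨M + 1, hilt⟩ ⟨M + 2, by omega⟩ = -2 := by
            rw [cval, if_neg (by omega), if_pos rfl, if_pos rfl]
          have b1 : B ⟨M, by omega⟩ ⟨kv, hklt⟩ = ((min M kv : ℕ) : ℚ) + 1 := by
            rw [bval, if_neg (by omega)]
          have b2 : B ⟨M + 1, by omega⟩ ⟨kv, hklt⟩ = ((min (M + 1) kv : ℕ) : ℚ) + 1 := by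
            rw [bval, if_neg (by omega)]
          have b3 : B ⟨M + 2, by omega⟩ ⟨kv, hklt⟩ = ((kv : ℚ) + 1) / 2 := by
            rw [bval, if_pos rfl]
          rw [c1, c2, c3, b1, b2, b3]
          rcases Nat.lt_or_ge kv (M + 1) with hk | hk
          · have e1 : min M kv = kv := by omega
            have e2 : min (M + 1) kv = kv := by omega
            rw [e1, e2, if_neg (by omega)]
            ring
          · rcases Nat.lt_or_ge kv (M + 2) with hk2 | hk2
            · have hkm : kv = M + 1 := by omega
              subst hkm
              have e1 : min M (M + 1) = M := by omega
              have e2 : min (M + 1) (M + 1) = M + 1 := by omega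
              rw [e1, e2, if_pos rfl]
              push_cast
              ring
            · have hkm : kv = M + 2 := by omega
              subst hkm
              have e1 : min M (M + 2) = M := by omega
              have e2 : min (M + 1) (M + 2) = M + 1 := by omega
              rw [e1, e2, if_neg (by omega)]
              push_cast
              ring
        · -- iv = M + 2 : two terms
          have hiv : iv = M + 2 := by omega
          subst hiv
          rw [sum_two' _ ⟨M + 1, by omega⟩ ⟨M + 2, by omega⟩ (by simp)
            (fun j hja hjb => by
              have h1 : (j : ℕ) ≠ M + 1 := fun h => hja (Fin.ext (by simpa using h))
              have h2 : (j : ℕ) ≠ M + 2 := fun h => hjb (Fin.ext (by simpa using h))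
              rw [hz _ j (by simp <;> omega) (by simp <;> omega) (by simp <;> omega), zero_mul])]
          have c1 : C ⟨M + 2, hilt⟩ ⟨M + 1, by omega⟩ = -1 := by
            rw [cval, if_neg (by omega), if_neg (by omega), if_pos rfl]
          have c2 : C ⟨M + 2, hilt⟩ ⟨M + 2, by omega⟩ = 2 := by
            rw [cval, if_pos rfl]
          have b1 : B ⟨M + 1, by omega⟩ ⟨kv, hklt⟩ = ((min (M + 1) kv : ℕ) : ℚ) + 1 := by
            rw [bval, if_neg (by omega)]
          have b2 : B ⟨M + 2, by omega⟩ ⟨kv, hklt⟩ = ((kv : ℚ) + 1) / 2 := by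
            rw [bval, if_pos rfl]
          rw [c1, c2, b1, b2]
          rcases Nat.lt_or_ge kv (M + 2) with hk | hk
          · have e1 : min (M + 1) kv = kv := by omega
            rw [e1, if_neg (by omega)]
            ring
          · have hkm : kv = M + 2 := by omega
            subst hkm
            have e1 : min (M + 1) (M + 2) = M + 1 := by omega
            rw [e1, if_pos rfl]
            push_cast
            ring
  have hinv : C⁻¹ = B := Matrix.inv_eq_right_inv hmul
  have hunit : IsUnit C := by
    have := invertibleOfRightInverse C B hmul
    exact isUnit_of_invertible C
  refine ⟨hunit, fun j => ?_⟩
  have key : ∀ i : Fin (M + 3), 2 * C⁻¹ i j =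
      if (i : ℕ) = M + 2 then (((j : ℕ) : ℚ) + 1 : ℚ)
      else (2 * (((min (i : ℕ) (j : ℕ) : ℕ) : ℚ) + 1) : ℚ) := by
    intro i
    rw [hinv, hBval]
    split_ifs with h
    · ring
    · ring
  have hjlt : (j : ℕ) < M + 3 := j.isLt
  refine ⟨?_, ?_, ?_⟩
  · intro i
    rw [key]
    split_ifs with h1 h2 h2
    · rw [h1]; norm_num
    · have : (0 : ℚ) ≤ ((min (i : ℕ) (j : ℕ) : ℕ) : ℚ) := Nat.cast_nonneg _
      linarith
    · have h3 : (2 : ℚ) ≤ ((j : ℕ) : ℚ) + 1 := by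
        have : 1 ≤ (j : ℕ) := by omega
        exact_mod_cast Nat.succ_le_succ this
      linarith
    · have : (0 : ℚ) ≤ ((min (i : ℕ) (j : ℕ) : ℕ) : ℚ) := Nat.cast_nonneg _
      linarith
  · rcases Nat.eq_zero_or_pos (j : ℕ) with hj | hj
    · refine ⟨⟨M + 2, by omega⟩, ?_⟩
      rw [key]
      simp [hj]
    · refine ⟨⟨0, by omega⟩, ?_⟩
      rw [key]
      rw [if_neg (by simp <;> omega), if_neg (by omega)]
      simp
  · intro i
    rw [key, hn1]
    by_cases h1 : (i : ℕ) = M + 2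
    · rw [if_pos h1]
      rcases Nat.eq_zero_or_pos (j : ℕ) with hj | hj
      · rw [if_pos hj]
        constructor
        · intro _; exact Or.inl ⟨hj, h1⟩
        · intro _; rw [hj]; norm_num
      · rw [if_neg (by omega)]
        constructor
        · intro h
          have : (j : ℕ) = 1 := by exact_mod_cast (by linarith : ((j : ℕ) : ℚ) = 1)
          right; left; exact ⟨this, Or.inr h1⟩
        · rintro (⟨hj0, _⟩ | ⟨hj1, _⟩ | ⟨hj2, hi0⟩)
          · omega
          · rw [hj1]; norm_num
          · omega
    · rw [if_neg h1]
      have hne : ((i : ℕ) = M + 2) = False := by simp [h1]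
      rcases Nat.eq_zero_or_pos (j : ℕ) with hj | hj
      · rw [if_pos hj]
        constructor
        · intro h
          exfalso
          have : (0 : ℚ) ≤ ((min (i : ℕ) (j : ℕ) : ℕ) : ℚ) := Nat.cast_nonneg _
          linarith
        · rintro (⟨_, hi⟩ | ⟨hj1, _⟩ | ⟨hj2, _⟩) <;> omega
      · rw [if_neg (by omega)]
        have hmin : (2 * (((min (i : ℕ) (j : ℕ) : ℕ) : ℚ) + 1) = 2) ↔
            min (i : ℕ) (j : ℕ) = 0 := by
          constructor
          · intro h
            have : ((min (i : ℕ) (j : ℕ) : ℕ) : ℚ) = 0 := by linarith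
            exact_mod_cast this
          · intro h; rw [h]; norm_num
        rw [hmin]
        constructor
        · intro h
          have hi0 : (i : ℕ) = 0 := by omega
          rcases Nat.lt_or_ge (j : ℕ) 2 with hj2 | hj2
          · right; left; exact ⟨by omega, Or.inl hi0⟩
          · right; right; exact ⟨hj2, hi0⟩
        · rintro (⟨hj0, _⟩ | ⟨hj1, hi⟩ | ⟨hj2, hi0⟩)
          · omega
          · omega
          · omega
end

section
/- Let n ≥ 4 and let C be the n×n matrix over ℚ with C_{ii} = 2, C_{i,i+1} = C_{i+1,i} = −1 for 1 ≤ i ≤ n−2, C_{n−2,n} = C_{n,n−2} = −1, and all other entries 0 (the Cartan matrix of type Dₙ). Let σ be the permutation of {1,…,n} that is the identity if n is even and that exchanges n−1 and n and fixes all other indices if n is odd. Then C is invertible, and for each j ∈ {1,…,n} set b(j) := min over i ∈ {1,…,n} of (C⁻¹)_{ij} + (C⁻¹)_{i,σ(j)}. Then: b(1) = 1, attained exactly at i ∈ {n−1, n}; b(2) = 2, attained exactly at i ∈ {1, n−1, n}; b(j) = 2 for 3 ≤ j ≤ n−2, attained exactly at i = 1; and b(n−1) = b(n) = 1, attained exactly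 at i = 1 when n ≥ 5, while for n = 4 the value b(3) = 1 is attained exactly at i ∈ {1,4} and b(4) = 1 exactly at i ∈ {1,3}. -/
set_option maxHeartbeats 2000000

private def Bv (n i k : ℕ) : ℚ :=
  if i < n-2 then
    if k < n-2 then (if i ≤ k then (i:ℚ)+1 else (k:ℚ)+1)
    else ((i:ℚ)+1)/2
  else if k < n-2 then ((k:ℚ)+1)/2
  else if i = k then (n:ℚ)/4 else ((n:ℚ)-2)/4

private def gv (n i j : ℕ) : ℕ :=
  if j + 2 < n then (if i + 2 < n then 8 * (if i ≤ j then i else j) + 8 else 4*(j+1))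
  else if i + 2 < n then 4*(i+1)
  else if n % 2 = 0 then (if i = j then 2*n else 2*(n-2))
  else 2*(n-1)

private lemma keyv (m i k : ℕ) (hi : i < m+4) (hk : k < m+4) :
    2 * Bv (m+4) i k
    - (if i+1 ≤ m+2 then Bv (m+4) (i+1) k else 0)
    - (if 1 ≤ i ∧ i ≤ m+2 then Bv (m+4) (i-1) k else 0)
    - (if i = m+1 then Bv (m+4) (m+3) k else 0)
    - (if i = m+3 then Bv (m+4) (m+1) k else 0)
    = if i = k then 1 else 0 := by
  have h2 : m+4-2 = m+2 := by omega
  rcases (show i = 0 ∨ (1 ≤ i ∧ i ≤ m) ∨ i = m+1 ∨ i = m+2 ∨ i = m+3 by omega) with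
    hi0 | ⟨hi1, hi2⟩ | hi0 | hi0 | hi0
  · subst hi0
    rw [if_pos (by omega), if_neg (by omega), if_neg (by omega), if_neg (by omega)]
    rcases (show k = 0 ∨ (1 ≤ k ∧ k ≤ m+1) ∨ k = m+2 ∨ k = m+3 by omega) with
      hk0 | ⟨hk1, hk2⟩ | hk0 | hk0
    all_goals try subst hk0
    all_goals (simp only [Bv, h2]; split_ifs <;> first | (exfalso; omega) | (qify at *; try linarith; try norm_num))
  · obtain ⟨i₀, rfl⟩ : ∃ i₀, i = i₀ + 1 := ⟨i - 1, by omega⟩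
    rw [if_pos (by omega), if_pos (by omega), if_neg (by omega), if_neg (by omega)]
    have h1 : i₀ + 1 - 1 = i₀ := by omega
    rcases (show k ≤ i₀ ∨ k = i₀+1 ∨ (i₀+2 ≤ k ∧ k ≤ m+1) ∨ k = m+2 ∨ k = m+3 by omega) with
      hk0 | hk0 | ⟨hk1, hk2⟩ | hk0 | hk0
    all_goals try subst hk0
    all_goals (simp only [Bv, h2, h1]; split_ifs <;> first | (exfalso; omega) | (qify at *; try linarith; try norm_num))
  · subst hi0
    rw [if_pos (by omega), if_pos (by omega), if_pos rfl, if_neg (by omega)]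
    have h1 : m + 1 - 1 = m := by omega
    rcases (show k ≤ m ∨ k = m+1 ∨ k = m+2 ∨ k = m+3 by omega) with
      hk0 | hk0 | hk0 | hk0
    all_goals try subst hk0
    all_goals (simp only [Bv, h2, h1]; split_ifs <;> first | (exfalso; omega) | (qify at *; try linarith; try norm_num))
  · subst hi0
    rw [if_neg (by omega), if_pos (by omega), if_neg (by omega), if_neg (by omega)]
    have h1 : m + 2 - 1 = m + 1 := by omega
    rcases (show k ≤ m ∨ k = m+1 ∨ k = m+2 ∨ k = m+3 by omega) with
      hk0 | hk0 | hk0 | hk0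
    all_goals try subst hk0
    all_goals (simp only [Bv, h2, h1]; split_ifs <;> first | (exfalso; omega) | (qify at *; try linarith; try norm_num))
  · subst hi0
    rw [if_neg (by omega), if_neg (by omega), if_neg (by omega), if_pos rfl]
    rcases (show k ≤ m ∨ k = m+1 ∨ k = m+2 ∨ k = m+3 by omega) with
      hk0 | hk0 | hk0 | hk0
    all_goals try subst hk0
    all_goals (simp only [Bv, h2]; split_ifs <;> first | (exfalso; omega) | (qify at *; try linarith; try norm_num))

private lemma sum_unique {n : ℕ} {P : Fin n → Prop} [DecidablePred P] {f : Fin n → ℚ}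
    {a : Fin n} (h : ∀ j, P j ↔ j = a) :
    (∑ j, if P j then f j else 0) = f a := by
  simp only [h]
  simp [Finset.sum_ite_eq']

private lemma sum_none {n : ℕ} {P : Fin n → Prop} [DecidablePred P] {f : Fin n → ℚ}
    (h : ∀ j, ¬ P j) :
    (∑ j, if P j then f j else 0) = 0 := by
  simp [h]

private lemma CB (n : ℕ) (hn : 4 ≤ n) (C : Matrix (Fin n) (Fin n) ℚ)
    (hC : ∀ i j : Fin n, C i j =
      if i = j then 2
      else if ((i : ℕ) + 1 = (j : ℕ) ∧ (j : ℕ) ≤ n - 2) ∨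
              ((j : ℕ) + 1 = (i : ℕ) ∧ (i : ℕ) ≤ n - 2) ∨
              ((i : ℕ) = n - 3 ∧ (j : ℕ) = n - 1) ∨
              ((i : ℕ) = n - 1 ∧ (j : ℕ) = n - 3) then -1
      else 0) :
    C * Matrix.of (fun i k : Fin n => Bv n i.val k.val) = 1 := by
  obtain ⟨m, rfl⟩ : ∃ m, n = m + 4 := ⟨n - 4, by omega⟩
  ext i k
  rw [Matrix.mul_apply, Matrix.one_apply]
  have hdec : ∀ j : Fin (m+4), C i j * Bv (m+4) j.val k.val =
      (if i = j then 2 * Bv (m+4) j.val k.val else 0)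
      + (if ((i : ℕ) + 1 = (j : ℕ) ∧ (j : ℕ) ≤ m+4-2) then -Bv (m+4) j.val k.val else 0)
      + (if ((j : ℕ) + 1 = (i : ℕ) ∧ (i : ℕ) ≤ m+4-2) then -Bv (m+4) j.val k.val else 0)
      + (if ((i : ℕ) = m+4-3 ∧ (j : ℕ) = m+4-1) then -Bv (m+4) j.val k.val else 0)
      + (if ((i : ℕ) = m+4-1 ∧ (j : ℕ) = m+4-3) then -Bv (m+4) j.val k.val else 0) := by
    intro j
    have hiv := i.isLt
    have hjv := j.isLt
    rw [hC i j]
    simp only [Fin.ext_iff]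
    split_ifs <;> first | ring1 | (exfalso; omega)
  simp only [Matrix.of_apply]
  rw [Finset.sum_congr rfl (fun j _ => hdec j)]
  rw [Finset.sum_add_distrib, Finset.sum_add_distrib, Finset.sum_add_distrib,
    Finset.sum_add_distrib]
  have h2 : m+4-2 = m+2 := by omega
  have h3 : m+4-3 = m+1 := by omega
  have h1 : m+4-1 = m+3 := by omega
  simp only [h2, h3, h1]
  have T0 : (∑ j : Fin (m+4), if i = j then 2 * Bv (m+4) j.val k.val else 0)
      = 2 * Bv (m+4) i.val k.val := by
    rw [Finset.sum_ite_eq]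
    simp
  have T1 : (∑ j : Fin (m+4), if ((i : ℕ) + 1 = (j : ℕ) ∧ (j : ℕ) ≤ m+2) then -Bv (m+4) j.val k.val else 0)
      = -(if (i:ℕ)+1 ≤ m+2 then Bv (m+4) ((i:ℕ)+1) k.val else 0) := by
    by_cases hc : (i:ℕ)+1 ≤ m+2
    · rw [if_pos hc]
      exact sum_unique (P := fun j => ((i:ℕ)+1 = (j:ℕ) ∧ (j:ℕ) ≤ m+2)) (a := (⟨(i:ℕ)+1, by omega⟩ : Fin (m+4))) (f := fun j => -Bv (m+4) j.val k.val)
        (fun j => by simp only [Fin.ext_iff]; omega)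
    · rw [if_neg hc, neg_zero]
      exact sum_none (fun j => by omega)
  have T2 : (∑ j : Fin (m+4), if ((j : ℕ) + 1 = (i : ℕ) ∧ (i : ℕ) ≤ m+2) then -Bv (m+4) j.val k.val else 0)
      = -(if 1 ≤ (i:ℕ) ∧ (i:ℕ) ≤ m+2 then Bv (m+4) ((i:ℕ)-1) k.val else 0) := by
    by_cases hc : 1 ≤ (i:ℕ) ∧ (i:ℕ) ≤ m+2
    · rw [if_pos hc]
      exact sum_unique (P := fun j => ((j:ℕ)+1 = (i:ℕ) ∧ (i:ℕ) ≤ m+2)) (a := (⟨(i:ℕ)-1, by omega⟩ : Fin (m+4))) (f := fun j => -Bv (m+4) j.val k.val)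
        (fun j => by simp only [Fin.ext_iff]; omega)
    · rw [if_neg hc, neg_zero]
      exact sum_none (fun j => by omega)
  have T3 : (∑ j : Fin (m+4), if ((i : ℕ) = m+1 ∧ (j : ℕ) = m+3) then -Bv (m+4) j.val k.val else 0)
      = -(if (i:ℕ) = m+1 then Bv (m+4) (m+3) k.val else 0) := by
    by_cases hc : (i:ℕ) = m+1
    · rw [if_pos hc]
      exact sum_unique (P := fun j => ((i:ℕ) = m+1 ∧ (j:ℕ) = m+3)) (a := (⟨m+3, by omega⟩ : Fin (m+4))) (f := fun j => -Bv (m+4) j.val k.val)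
        (fun j => by simp only [Fin.ext_iff]; omega)
    · rw [if_neg hc, neg_zero]
      exact sum_none (fun j => by omega)
  have T4 : (∑ j : Fin (m+4), if ((i : ℕ) = m+3 ∧ (j : ℕ) = m+1) then -Bv (m+4) j.val k.val else 0)
      = -(if (i:ℕ) = m+3 then Bv (m+4) (m+1) k.val else 0) := by
    by_cases hc : (i:ℕ) = m+3
    · rw [if_pos hc]
      exact sum_unique (P := fun j => ((i:ℕ) = m+3 ∧ (j:ℕ) = m+1)) (a := (⟨m+1, by omega⟩ : Fin (m+4))) (f := fun j => -Bv (m+4) j.val k.val)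
        (fun j => by simp only [Fin.ext_iff]; omega)
    · rw [if_neg hc, neg_zero]
      exact sum_none (fun j => by omega)
  rw [T0, T1, T2, T3, T4]
  have K := keyv m i.val k.val i.isLt k.isLt
  simp only [Fin.ext_iff]
  linarith [K]

private lemma gval (n i j j' : ℕ) (hn : 4 ≤ n) (hi : i < n) (hj : j < n) (hj' : j' < n)
    (hs : j' = if n % 2 = 1 ∧ j = n - 2 then n - 1
        else if n % 2 = 1 ∧ j = n - 1 then n - 2
        else j) :
    Bv n i j + Bv n i j' = (gv n i j : ℚ) / 4 := by
  obtain ⟨m, rfl⟩ : ∃ m, n = m + 4 := ⟨n - 4, by omega⟩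
  have h2 : m+4-2 = m+2 := by omega
  have h1 : m+4-1 = m+3 := by omega
  rw [h2, h1] at hs
  split_ifs at hs <;> subst hs <;>
    (simp only [Bv, gv, h2, h1]; split_ifs <;>
      first | (exfalso; omega) | (push_cast; try linarith; try norm_num))

private lemma g_lb (n i j : ℕ) (hn : 4 ≤ n) (hi : i < n) (hj : j < n) :
    (if j = 0 ∨ j = n-2 ∨ j = n-1 then 4 else 8) ≤ gv n i j := by
  simp only [gv]; split_ifs <;> omega

private lemma g_ex (n j : ℕ) (hn : 4 ≤ n) (hj : j < n) :
    gv n (if j = 0 then n-2 else 0) j = (if j = 0 ∨ j = n-2 ∨ j = n-1 then 4 else 8) := by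
  simp only [gv]; split_ifs <;> omega

private lemma g_eq (n i j : ℕ) (hn : 4 ≤ n) (hi : i < n) (hj : j < n) :
    (gv n i j = (if j = 0 ∨ j = n-2 ∨ j = n-1 then 4 else 8)) ↔
      ((j = 0 ∧ (i = n - 2 ∨ i = n - 1)) ∨
        (j = 1 ∧ (i = 0 ∨ i = n - 2 ∨ i = n - 1)) ∨
        (2 ≤ j ∧ j ≤ n - 3 ∧ i = 0) ∨
        (5 ≤ n ∧ (j = n - 2 ∨ j = n - 1) ∧ i = 0) ∨
        (n = 4 ∧ j = 2 ∧ (i = 0 ∨ i = 3)) ∨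
        (n = 4 ∧ j = 3 ∧ (i = 0 ∨ i = 2))) := by
  simp only [gv]; split_ifs <;> omega

/-- Type Dₙ row of the minimal bandwidth theorem: `C` is the Cartan matrix of type Dₙ
(0-based indexing: Lean index `i : Fin n` corresponds to the math index `i+1`; the chain
is 1—2—⋯—(n−1) with the extra edge (n−2)—n).  The permutation σ is the identity for even
`n` and exchanges the last two indices for odd `n`; `j'` is σ(j).  With
`b j = 1` for `j ∈ {1, n−1, n}` (math) and `b j = 2` otherwise, the minimum over `i` of
`C⁻¹ i j + C⁻¹ i j'` equals `b j`, with the attainment sets as in the theorem. -/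
theorem stmt_3 (n : ℕ) (hn : 4 ≤ n) (C : Matrix (Fin n) (Fin n) ℚ)
    (hC : ∀ i j : Fin n, C i j =
      if i = j then 2
      else if ((i : ℕ) + 1 = (j : ℕ) ∧ (j : ℕ) ≤ n - 2) ∨
              ((j : ℕ) + 1 = (i : ℕ) ∧ (i : ℕ) ≤ n - 2) ∨
              ((i : ℕ) = n - 3 ∧ (j : ℕ) = n - 1) ∨
              ((i : ℕ) = n - 1 ∧ (j : ℕ) = n - 3) then -1
      else 0) :
    IsUnit C ∧
    ∀ j j' : Fin n,
      ((j' : ℕ) = if n % 2 = 1 ∧ (j : ℕ) = n - 2 then n - 1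
        else if n % 2 = 1 ∧ (j : ℕ) = n - 1 then n - 2
        else (j : ℕ)) →
      (∀ i : Fin n,
        (if (j : ℕ) = 0 ∨ (j : ℕ) = n - 2 ∨ (j : ℕ) = n - 1 then (1 : ℚ) else 2) ≤
          C⁻¹ i j + C⁻¹ i j') ∧
      (∃ i : Fin n, C⁻¹ i j + C⁻¹ i j' =
        (if (j : ℕ) = 0 ∨ (j : ℕ) = n - 2 ∨ (j : ℕ) = n - 1 then (1 : ℚ) else 2)) ∧
      (∀ i : Fin n,
        (C⁻¹ i j + C⁻¹ i j' =
            (if (j : ℕ) = 0 ∨ (j : ℕ) = n - 2 ∨ (j : ℕ) = n - 1 then (1 : ℚ) else 2) ↔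
          ((j : ℕ) = 0 ∧ ((i : ℕ) = n - 2 ∨ (i : ℕ) = n - 1)) ∨
          ((j : ℕ) = 1 ∧ ((i : ℕ) = 0 ∨ (i : ℕ) = n - 2 ∨ (i : ℕ) = n - 1)) ∨
          (2 ≤ (j : ℕ) ∧ (j : ℕ) ≤ n - 3 ∧ (i : ℕ) = 0) ∨
          (5 ≤ n ∧ ((j : ℕ) = n - 2 ∨ (j : ℕ) = n - 1) ∧ (i : ℕ) = 0) ∨
          (n = 4 ∧ (j : ℕ) = 2 ∧ ((i : ℕ) = 0 ∨ (i : ℕ) = 3)) ∨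
          (n = 4 ∧ (j : ℕ) = 3 ∧ ((i : ℕ) = 0 ∨ (i : ℕ) = 2)))) := by
  have hB := CB n hn C hC
  have hU : IsUnit C := (Matrix.isUnit_iff_isUnit_det C).mpr (Matrix.isUnit_det_of_right_inverse hB)
  have hInv : C⁻¹ = Matrix.of (fun i k : Fin n => Bv n i.val k.val) :=
    Matrix.inv_eq_right_inv hB
  refine ⟨hU, ?_⟩
  intro j j' hj'
  have hg : ∀ i : Fin n, C⁻¹ i j + C⁻¹ i j' = (gv n i.val j.val : ℚ) / 4 := by
    intro i
    rw [hInv]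
    simp only [Matrix.of_apply]
    exact gval n i j j' hn i.isLt j.isLt j'.isLt hj'
  refine ⟨?_, ?_, ?_⟩
  · intro i
    rw [hg i]
    have h := g_lb n i.val j.val hn i.isLt j.isLt
    by_cases hP : (j:ℕ) = 0 ∨ (j:ℕ) = n-2 ∨ (j:ℕ) = n-1
    · rw [if_pos hP] at h ⊢
      have h4 : (4:ℚ) ≤ (gv n i.val j.val : ℚ) := by exact_mod_cast h
      linarith
    · rw [if_neg hP] at h ⊢
      have h8 : (8:ℚ) ≤ (gv n i.val j.val : ℚ) := by exact_mod_cast h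
      linarith
  · refine ⟨⟨if (j:ℕ) = 0 then n-2 else 0, by split_ifs <;> omega⟩, ?_⟩
    rw [hg]
    show ((gv n (if (j:ℕ) = 0 then n-2 else 0) j.val : ℕ) : ℚ) / 4 = _
    rw [g_ex n j.val hn j.isLt]
    split_ifs with h' <;> norm_num
  · intro i
    rw [hg i]
    have h := g_eq n i.val j.val hn i.isLt j.isLt
    by_cases hP : (j:ℕ) = 0 ∨ (j:ℕ) = n-2 ∨ (j:ℕ) = n-1
    · rw [if_pos hP] at h ⊢
      constructor
      · intro he
        apply h.mp
        have h4 : ((gv n i.val j.val : ℕ) : ℚ) = 4 := by linarith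
        exact_mod_cast h4
      · intro hd
        have := h.mpr hd
        rw [this]
        norm_num
    · rw [if_neg hP] at h ⊢
      constructor
      · intro he
        apply h.mp
        have h8 : ((gv n i.val j.val : ℕ) : ℚ) = 8 := by linarith
        exact_mod_cast h8
      · intro hd
        have := h.mpr hd
        rw [this]
        norm_num
end

section
/- Let C be the 6×6 matrix over ℚ with C_{ii} = 2, C_{ij} = −1 whenever {i,j} is one of the pairs {1,3}, {3,4}, {4,5}, {5,6}, {2,4}, and C_{ij} = 0 otherwise (the Cartan matrix of type E₆ in Bourbaki numbering). Let σ be the permutation of {1,…,6} exchanging 1 ↔ 6 and 3 ↔ 5 and fixing 2 and 4. Then C is invertible, and for each j set b(j) := min over i ∈ {1,…,6} of (C⁻¹)_{ij} + (C⁻¹)_{i,σ(j)}. Then (b(1),…,b(6)) = (2, 2, 3, 4, 3, 2); the minimum is attained exactly at i ∈ {1,2,6} when j ∈ {1,6}, and exactly at i ∈ {1,6} when 2 ≤ j ≤ 5. -/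
/-!
The inverse of the E₆ Cartan matrix is computed explicitly (its columns are the fundamental
weights), and `C⁻¹ i j + C⁻¹ i (σ j)` turns out to be an integer table. Rows `0` and `5` of the
table are its pointwise minimum, and reading off which rows tie with them gives the rest.
-/

namespace CartanMatrix.E₆

open Matrix

def fundamentalWeights : Matrix (Fin 6) (Fin 6) ℚ :=
  !![4/3, 1,  5/3, 2, 4/3,  2/3;
     1,   2,  2,   3, 2,    1;
     5/3, 2, 10/3, 4, 8/3,  4/3;
     2,   3,  4,   6, 4,    2;
     4/3, 2,  8/3, 4, 10/3, 5/3;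
     2/3, 1,  4/3, 2, 5/3,  4/3]

theorem map_intCast_mul_fundamentalWeights :
    E₆.map (Int.cast : ℤ → ℚ) * fundamentalWeights = 1 := by
  ext i j
  fin_cases i <;> fin_cases j <;>
    simp [E₆, fundamentalWeights, mul_apply, Fin.sum_univ_six, cons_val] <;> norm_num

theorem isUnit_map_intCast : IsUnit (E₆.map (Int.cast : ℤ → ℚ)) :=
  (isUnit_iff_isUnit_det _).2 (isUnit_det_of_right_inverse map_intCast_mul_fundamentalWeights)

theorem inv_map_intCast : (E₆.map (Int.cast : ℤ → ℚ))⁻¹ = fundamentalWeights :=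
  inv_eq_right_inv map_intCast_mul_fundamentalWeights

def diagramAut : Fin 6 → Fin 6 := ![5, 1, 4, 3, 2, 0]

/-- Entry `(i, j)` is `ω_{i+1}^∨(ω_{j+1} - w₀ ω_{j+1})`, using `-w₀ ω_j = ω_{σ j}`. -/
def bandwidth : Matrix (Fin 6) (Fin 6) ℤ :=
  !![2, 2, 3,  4, 3, 2;
     2, 4, 4,  6, 4, 2;
     3, 4, 6,  8, 6, 3;
     4, 6, 8, 12, 8, 4;
     3, 4, 6,  8, 6, 3;
     2, 2, 3,  4, 3, 2]

theorem fundamentalWeights_add_diagramAut (i j : Fin 6) :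
    fundamentalWeights i j + fundamentalWeights i (diagramAut j) = bandwidth i j := by
  fin_cases i <;> fin_cases j <;>
    simp [fundamentalWeights, diagramAut, bandwidth, cons_val] <;> norm_num

-- With `i` quantified outermost, `decide` finds no `Decidable` instance; hence the order of reverts.
theorem bandwidth_zero_le (i j : Fin 6) : bandwidth 0 j ≤ bandwidth i j := by
  revert i; revert j; decide

theorem bandwidth_eq_zero_iff_of_end {i j : Fin 6} (hj : j = 0 ∨ j = 5) :
    bandwidth i j = bandwidth 0 j ↔ i = 0 ∨ i = 1 ∨ i = 5 := by
  revert i hj; revert j; decide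

theorem bandwidth_eq_zero_iff_of_inner {i j : Fin 6} (hj : j = 1 ∨ j = 2 ∨ j = 3 ∨ j = 4) :
    bandwidth i j = bandwidth 0 j ↔ i = 0 ∨ i = 5 := by
  revert i hj; revert j; decide

end CartanMatrix.E₆

open CartanMatrix E₆ in
/-- Type E₆ row of the minimal bandwidth theorem: `C` is the Cartan matrix of type E₆ in
Bourbaki numbering (0-based indexing: Lean index `i : Fin 6` corresponds to the math
index `i+1`), `σ` is the diagram automorphism 1 ↔ 6, 3 ↔ 5, and `b = (2,2,3,4,3,2)`.
The minimum over `i` of `C⁻¹ i j + C⁻¹ i (σ j)` equals `b j`, attained exactly at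
`i ∈ {1,2,6}` (math) when `j ∈ {1,6}` and exactly at `i ∈ {1,6}` when `2 ≤ j ≤ 5`. -/
theorem stmt_4 (C : Matrix (Fin 6) (Fin 6) ℚ)
    (hC : C = !![2, 0, -1, 0, 0, 0;
                 0, 2, 0, -1, 0, 0;
                 -1, 0, 2, -1, 0, 0;
                 0, -1, -1, 2, -1, 0;
                 0, 0, 0, -1, 2, -1;
                 0, 0, 0, 0, -1, 2])
    (σ : Fin 6 → Fin 6) (hσ : σ = ![5, 1, 4, 3, 2, 0])
    (b : Fin 6 → ℚ) (hb : b = ![2, 2, 3, 4, 3, 2]) :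
    IsUnit C ∧
    ∀ j : Fin 6,
      (∀ i : Fin 6, b j ≤ C⁻¹ i j + C⁻¹ i (σ j)) ∧
      (∃ i : Fin 6, C⁻¹ i j + C⁻¹ i (σ j) = b j) ∧
      ((j = 0 ∨ j = 5) →
        ∀ i : Fin 6, (C⁻¹ i j + C⁻¹ i (σ j) = b j ↔ (i = 0 ∨ i = 1 ∨ i = 5))) ∧
      ((j = 1 ∨ j = 2 ∨ j = 3 ∨ j = 4) →
        ∀ i : Fin 6, (C⁻¹ i j + C⁻¹ i (σ j) = b j ↔ (i = 0 ∨ i = 5))) := by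
  have hcartan : C = E₆.map (Int.cast : ℤ → ℚ) := by
    rw [hC]; ext i j; fin_cases i <;> fin_cases j <;> norm_num [E₆]
  have hsum (i j : Fin 6) : C⁻¹ i j + C⁻¹ i (σ j) = bandwidth i j := by
    rw [hcartan, hσ, inv_map_intCast]; exact fundamentalWeights_add_diagramAut i j
  have hbj (j : Fin 6) : b j = bandwidth 0 j := by
    rw [hb]; fin_cases j <;> norm_num [bandwidth]
  refine ⟨hcartan ▸ isUnit_map_intCast, fun j => ?_⟩
  simp only [hsum, hbj, Int.cast_le, Int.cast_inj]
  exact ⟨fun i => bandwidth_zero_le i j, ⟨0, rfl⟩,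
    fun hj _ => bandwidth_eq_zero_iff_of_end hj, fun hj _ => bandwidth_eq_zero_iff_of_inner hj⟩
end

section
/- Let K be a field of characteristic zero, let 𝔤 be a Lie algebra over K, and let V be a Lie module over 𝔤. Suppose given a family (𝔤_k)_{k ∈ ℤ} of K-subspaces of 𝔤 whose internal direct sum is 𝔤, and a family (V_m)_{m ∈ ℤ} of K-subspaces of V whose internal direct sum is V, such that ⁅x, w⁆ ∈ V_{k+m} for all k, m ∈ ℤ, x ∈ 𝔤_k, w ∈ V_m. Suppose furthermore that 𝔤' is a K-subspace of 𝔤 and h ∈ 𝔤₀ is an element such that 𝔤₀ = 𝔤' + K·h and ⁅h, w⁆ = m • w for every m ∈ ℤ and w ∈ V_m. Then for every m ∈ ℤ and v ∈ V_m, the set {⁅x, v⁆ : x ∈ 𝔤} ∩ V_m is contained in {⁅x, v⁆ : x ∈ 𝔤'} + K·v. -/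
/-!
Bracketing with `v ∈ V m` shifts degrees by `m`, so the degree-`m` component of `⁅x, v⁆` is
`⁅x₀, v⁆`, where `x₀` is the degree-`0` component of `x`. If `⁅x, v⁆ ∈ V m` it therefore equals
`⁅x₀, v⁆`, and writing `x₀ = y + c • h` with `y ∈ g'` gives `⁅x, v⁆ = ⁅y, v⁆ + (c * m) • v`.
-/

open DirectSum

section GradedLieModule

variable {ι R L M : Type*} [AddCancelCommMonoid ι] [DecidableEq ι] [Semiring R]
  [LieRing L] [Module R L] [AddCommGroup M] [Module R M] [LieRingModule L M]
  (𝔤 : ι → Submodule R L) (V : ι → Submodule R M) [Decomposition 𝔤] [Decomposition V]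

theorem decompose_lie_of_mem (hcompat : ∀ k m x w, x ∈ 𝔤 k → w ∈ V m → ⁅x, w⁆ ∈ V (k + m))
    {m : ι} {v : M} (hv : v ∈ V m) (x : L) (n : ι) :
    (decompose V ⁅x, v⁆ (n + m) : M) = ⁅(decompose 𝔤 x n : L), v⁆ := by
  induction x using Decomposition.inductionOn 𝔤 with
  | zero => simp
  | @homogeneous k x =>
    by_cases hkn : k = n
    · subst hkn
      rw [decompose_of_mem_same V (hcompat k m x v x.2 hv), decompose_coe, of_eq_same]
    · rw [decompose_of_mem_ne V (hcompat k m x v x.2 hv) (by simpa using hkn),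
        decompose_of_mem_ne 𝔤 x.2 hkn, zero_lie]
  | add x y hx hy => simp [add_lie, hx, hy]

theorem lie_eq_lie_decompose_zero_of_mem
    (hcompat : ∀ k m x w, x ∈ 𝔤 k → w ∈ V m → ⁅x, w⁆ ∈ V (k + m))
    {m : ι} {v : M} (hv : v ∈ V m) {x : L} (hxv : ⁅x, v⁆ ∈ V m) :
    ⁅x, v⁆ = ⁅(decompose 𝔤 x 0 : L), v⁆ := by
  rw [← decompose_lie_of_mem 𝔤 V hcompat hv, zero_add, decompose_of_mem_same V hxv]

end GradedLieModule

theorem stmt_12_general (K : Type*) [Field K]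
    (L : Type*) [LieRing L] [LieAlgebra K L]
    (M : Type*) [AddCommGroup M] [Module K M] [LieRingModule L M] [LieModule K L M]
    (g : ℤ → Submodule K L) (hg : DirectSum.IsInternal g)
    (V : ℤ → Submodule K M) (hV : DirectSum.IsInternal V)
    (hcompat : ∀ (k m : ℤ) (x : L) (w : M), x ∈ g k → w ∈ V m → ⁅x, w⁆ ∈ V (k + m))
    (g' : Submodule K L) (h : L)
    (hsum : g 0 = g' ⊔ Submodule.span K {h})
    (hact : ∀ (m : ℤ) (w : M), w ∈ V m → ⁅h, w⁆ = (m : ℤ) • w) :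
    ∀ (m : ℤ) (v : M), v ∈ V m →
      {w : M | ∃ x : L, ⁅x, v⁆ = w} ∩ (V m : Set M) ⊆
        {w : M | ∃ x ∈ g', ∃ c : K, w = ⁅x, v⁆ + c • v} := by
  rintro m v hv _ ⟨⟨x, rfl⟩, hxv⟩
  let := hg.chooseDecomposition
  let := hV.chooseDecomposition
  have hx₀ : (decompose g x 0 : L) ∈ g' ⊔ Submodule.span K {h} := hsum ▸ (decompose g x 0).2
  obtain ⟨y, hy, _, hz, hyz⟩ := Submodule.mem_sup.mp hx₀
  obtain ⟨c, rfl⟩ := Submodule.mem_span_singleton.mp hz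
  refine ⟨y, hy, c * m, ?_⟩
  rw [lie_eq_lie_decompose_zero_of_mem g V hcompat hv hxv, ← hyz, add_lie, smul_lie,
    hact m v hv, mul_smul, Int.cast_smul_eq_zsmul]

/-- Refined key step in the proof that `X ∩ ℙ(V_m)` is a union of transversal-group
orbits: for a ℤ-graded Lie algebra `L = ⊕ₖ gₖ` over a field of characteristic zero
acting compatibly on a ℤ-graded module `M = ⊕ₘ Vₘ`, if `g₀ = g' + K·h` with `h` acting
on `Vₘ` as multiplication by `m`, then for every `v ∈ Vₘ` the set
`{⁅x, v⁆ : x ∈ L} ∩ Vₘ` is contained in `{⁅x, v⁆ : x ∈ g'} + K·v`. -/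
theorem stmt_12 (K : Type*) [Field K] [CharZero K]
    (L : Type*) [LieRing L] [LieAlgebra K L]
    (M : Type*) [AddCommGroup M] [Module K M] [LieRingModule L M] [LieModule K L M]
    (g : ℤ → Submodule K L) (hg : DirectSum.IsInternal g)
    (V : ℤ → Submodule K M) (hV : DirectSum.IsInternal V)
    (hcompat : ∀ (k m : ℤ) (x : L) (w : M), x ∈ g k → w ∈ V m → ⁅x, w⁆ ∈ V (k + m))
    (g' : Submodule K L) (h : L) (hh : h ∈ g 0)
    (hsum : g 0 = g' ⊔ Submodule.span K {h})
    (hact : ∀ (m : ℤ) (w : M), w ∈ V m → ⁅h, w⁆ = (m : ℤ) • w) :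
    ∀ (m : ℤ) (v : M), v ∈ V m →
      {w : M | ∃ x : L, ⁅x, v⁆ = w} ∩ (V m : Set M) ⊆
        {w : M | ∃ x ∈ g', ∃ c : K, w = ⁅x, v⁆ + c • v} :=
  stmt_12_general K L M g hg V hV hcompat g' h hsum hact
end
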